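/- Let d = 2 and Q_1 = [0,1/5]^2 ∈ Q_1^(2)(F^(2)). Fix an integer m ≥ 1. For every interval Q̃ ∈ Q_{m+1}^(1)(G^(1) ∩ [0,1/5]) and every i ∈ {0, 1, ..., 5^m + 1}, the rectangle Q_{Q̃,i} := [(5^m − 1 + i)/5^{m+1}, (5^m + i)/5^{m+1}] × Q̃ belongs to Q_{m+1}^(2)(F^(2)); moreover Q_{Q̃,0} ∈ S^m({Q_1}) and Q_{Q̃,5^m+1} ∈ S^m(Γ(Q_1)^c). -/

import Mathlib

/-! The strip `[0,1] × G⁽¹⁾` lies in `F⁽²⁾`: inductively `[0,1] × Gₙ⁽¹⁾ ⊆ Fₙ⁽²⁾`, because the two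
cells `[0,1/5]` and `[4/5,1]` of `G₁⁽¹⁾` are exactly the bottom and top rows of the square, and these
rows survive whole in `F₁⁽²⁾`. Hence every level-`(m+1)` square sitting over an interval whose
interior meets `G⁽¹⁾`, in particular every `Q_{Q̃,i}`, is a cell of `F⁽²⁾`. The first one lies in
`[0,1/5]²`, and the last one in the cell `[2/5,3/5] × [0,1/5]`, which is disjoint from `Q₁`. -/

open Set MeasureTheory Filter
open scoped Classical

noncomputable section

/-- Points of `ℝ^d` with the Euclidean metric. -/
abbrev Pt (d : ℕ) := EuclideanSpace ℝ (Fin d)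

/-- The closed cube `∏ [(lᵢ-1)/5ⁿ, lᵢ/5ⁿ]`. -/
def cube (d n : ℕ) (l : Fin d → ℕ) : Set (Pt d) :=
  {x | ∀ i, ((l i : ℝ) - 1) / 5 ^ n ≤ x i ∧ x i ≤ (l i : ℝ) / 5 ^ n}

/-- The collection `𝒬ₙ⁽ᵈ⁾` of level-`n` cubes. -/
def Qcol (d n : ℕ) : Set (Set (Pt d)) :=
  {Q | ∃ l : Fin d → ℕ, (∀ i, 1 ≤ l i ∧ l i ≤ 5 ^ n) ∧ Q = cube d n l}

/-- `𝒬ₙ⁽ᵈ⁾(A)`: the level-`n` cubes whose interior meets `A`. -/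
def QcolOf (d n : ℕ) (A : Set (Pt d)) : Set (Set (Pt d)) :=
  {Q | Q ∈ Qcol d n ∧ (interior Q ∩ A).Nonempty}

/-- `F₀⁽ᵈ⁾ = [0,1]^d`. -/
def F0 (d : ℕ) : Set (Pt d) := {x | ∀ i, x i ∈ Icc (0 : ℝ) 1}

/-- `F₁⁽ᵈ⁾`. -/
def F1 (d : ℕ) : Set (Pt d) :=
  F0 d \ ⋃ i : Fin d, {x | (∀ j, j < i → x j ∈ Ioo (2/5 : ℝ) (3/5)) ∧
    x i ∈ Ioo (1/5 : ℝ) (2/5) ∪ Ioo (3/5 : ℝ) (4/5) ∧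
    ∀ j, i < j → x j ∈ Ioo (2/5 : ℝ) (3/5)}

/-- The orientation-preserving affine map from `[0,1]^d` onto the cube indexed by `l` at
level `n`. -/
def psi (d n : ℕ) (l : Fin d → ℕ) (x : Pt d) : Pt d :=
  WithLp.toLp 2 (fun i => ((l i : ℝ) - 1) / 5 ^ n + x i / 5 ^ n)

/-- The approximations `Fₙ⁽ᵈ⁾`. -/
def Fn (d : ℕ) : ℕ → Set (Pt d)
  | 0 => F0 d
  | 1 => F1 d
  | n + 2 => ⋃ l ∈ {l : Fin d → ℕ | cube d 1 l ∈ QcolOf d 1 (F1 d)}, psi d 1 l '' Fn d (n + 1)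

/-- The fractal `F⁽ᵈ⁾`. -/
def Fset (d : ℕ) : Set (Pt d) := ⋂ n, Fn d n

/-- `G₁⁽ᵈ⁾`: union of the level-1 cubes of `F₁⁽ᵈ⁾` which meet the boundary of `[0,1]^d`. -/
def G1 (d : ℕ) : Set (Pt d) :=
  ⋃ Q ∈ {Q | Q ∈ QcolOf d 1 (F1 d) ∧ (Q ∩ frontier (F0 d)).Nonempty}, Q

/-- The approximations `Gₙ⁽ᵈ⁾`. -/
def Gn (d : ℕ) : ℕ → Set (Pt d)
  | 0 => F0 d
  | 1 => G1 d
  | n + 2 => ⋃ l ∈ {l : Fin d → ℕ | cube d 1 l ∈ QcolOf d 1 (G1 d)}, psi d 1 l '' Gn d (n + 1)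

/-- The boundary fractal `G⁽ᵈ⁾ = [0,1]^d ∩ ⋂_{n ≥ 1} Gₙ⁽ᵈ⁾`. -/
def Gset (d : ℕ) : Set (Pt d) := F0 d ∩ ⋂ n, ⋂ (_ : 1 ≤ n), Gn d n

/-- The discrete `p`-energy `𝓔ₚⁿ(f)` on the level-`n` cubes of `F⁽ᵈ⁾`. -/
def energy (d n : ℕ) (p : ℝ) (f : Set (Pt d) → ℝ) : ℝ :=
  (1 / 2) * ∑' Q : QcolOf d n (Fset d), ∑' Q' : QcolOf d n (Fset d),
    if ((Q : Set (Pt d)) ∩ (Q' : Set (Pt d))).Nonempty then |f Q - f Q'| ^ p else 0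

/-- `Sᵐ(A)`: level-`(n+m)` cubes of `F⁽ᵈ⁾` contained in some cube of `A`. -/
def Sm (d n m : ℕ) (A : Set (Set (Pt d))) : Set (Set (Pt d)) :=
  {Q | Q ∈ QcolOf d (n + m) (Fset d) ∧ ∃ Q' ∈ A, Q ⊆ Q'}

/-- The effective `p`-conductance `𝓔_{p,m}(A₁, A₂)`. -/
def conduct (d n m : ℕ) (p : ℝ) (A₁ A₂ : Set (Set (Pt d))) : ℝ :=
  sInf {e : ℝ | ∃ f : Set (Pt d) → ℝ,
    (∀ Q ∈ Sm d n m A₁, f Q = 1) ∧ (∀ Q ∈ Sm d n m A₂, f Q = 0) ∧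
    e = energy d (n + m) p f}

/-- `Γ(Q)`: level-`n` cubes of `F⁽ᵈ⁾` meeting `Q`. -/
def Gam (d n : ℕ) (Q : Set (Pt d)) : Set (Set (Pt d)) :=
  {Q' | Q' ∈ QcolOf d n (Fset d) ∧ (Q' ∩ Q).Nonempty}

/-- `Γ(Q)ᶜ = 𝒬ₙ⁽ᵈ⁾(F⁽ᵈ⁾) \ Γ(Q)`. -/
def GamC (d n : ℕ) (Q : Set (Pt d)) : Set (Set (Pt d)) :=
  QcolOf d n (Fset d) \ Gam d n Q

/-- The corner cube `[0, 1/5]^d`. -/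
def Qone (d : ℕ) : Set (Pt d) := {x | ∀ i, x i ∈ Icc (0 : ℝ) (1/5)}

/-- The center cube `[2/5, 3/5]^d`. -/
def Qtwo (d : ℕ) : Set (Pt d) := {x | ∀ i, x i ∈ Icc (2/5 : ℝ) (3/5)}

end

/-- The rectangle `Q_{Q̃,i} = [(5^m-1+i)/5^{m+1}, (5^m+i)/5^{m+1}] × Q̃`. -/
def rect2 (m i : ℕ) (Qt : Set (Pt 1)) : Set (Pt 2) :=
  {x | x 0 ∈ Icc ((5 ^ m - 1 + i : ℝ) / 5 ^ (m + 1)) ((5 ^ m + i : ℝ) / 5 ^ (m + 1)) ∧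
    WithLp.toLp 2 (fun _ : Fin 1 => x 1) ∈ Qt}

lemma interior_setOf_forall_mem_Icc {ι : Type*} [Fintype ι] (a b : ι → ℝ) :
    interior {x : EuclideanSpace ℝ ι | ∀ i, x i ∈ Icc (a i) (b i)} =
      {x | ∀ i, x i ∈ Ioo (a i) (b i)} := by
  have h : {x : EuclideanSpace ℝ ι | ∀ i, x i ∈ Icc (a i) (b i)} =
      (EuclideanSpace.equiv ι ℝ).toHomeomorph ⁻¹' univ.pi fun i => Icc (a i) (b i) := by
    ext x; simp only [mem_preimage, mem_univ_pi]; rfl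
  rw [h, ← Homeomorph.preimage_interior, interior_pi_set finite_univ]
  ext x; simp only [interior_Icc, mem_preimage, mem_univ_pi]; rfl

lemma mem_interior_cube {d n : ℕ} {l : Fin d → ℕ} {x : Pt d} :
    x ∈ interior (cube d n l) ↔ ∀ i, x i ∈ Ioo (((l i : ℝ) - 1) / 5 ^ n) ((l i : ℝ) / 5 ^ n) :=
  Set.ext_iff.1 (interior_setOf_forall_mem_Icc (fun i => ((l i : ℝ) - 1) / 5 ^ n)
    (fun i => (l i : ℝ) / 5 ^ n)) x

lemma interior_F0 (d : ℕ) : interior (F0 d) = {x | ∀ i, x i ∈ Ioo (0 : ℝ) 1} :=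
  interior_setOf_forall_mem_Icc (fun _ => 0) (fun _ => 1)

lemma Qone_eq_cube (d : ℕ) : Qone d = cube d 1 1 := by
  ext x; simp [Qone, cube]

lemma cube_subset_cube {d n m : ℕ} {l l' : Fin d → ℕ}
    (h : ∀ i, ((l' i : ℝ) - 1) * 5 ^ m + 1 ≤ l i ∧ (l i : ℝ) ≤ l' i * 5 ^ m) :
    cube d (m + n) l ⊆ cube d n l' := by
  intro x hx i
  obtain ⟨hlo, hhi⟩ := hx i
  obtain ⟨hl, hu⟩ := h i
  have h5m : (0 : ℝ) < 5 ^ m := by positivity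
  have h5n : (0 : ℝ) < 5 ^ n := by positivity
  rw [pow_add, div_le_iff₀ (by positivity)] at hlo
  rw [pow_add, le_div_iff₀ (by positivity)] at hhi
  constructor
  · rw [div_le_iff₀ h5n]; nlinarith
  · rw [le_div_iff₀ h5n]; nlinarith

lemma index_mem_of_cube_mem_QcolOf {d n : ℕ} {l : Fin d → ℕ} {A : Set (Pt d)}
    (h : cube d n l ∈ QcolOf d n A) (i : Fin d) : 1 ≤ l i ∧ l i ≤ 5 ^ n := by
  obtain ⟨⟨l', hl', hQ⟩, x, hx, -⟩ := h
  -- an interior point pins down the index, so `l = l'`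
  have h5 : (0 : ℝ) < 5 ^ n := by positivity
  have hl := mem_interior_cube.1 hx i
  rw [hQ] at hx
  have hl'' := mem_interior_cube.1 hx i
  have h1 : (l i : ℝ) - 1 < l' i := by
    have := hl.1.trans hl''.2; rwa [div_lt_div_iff_of_pos_right h5] at this
  have h2 : (l' i : ℝ) - 1 < l i := by
    have := hl''.1.trans hl.2; rwa [div_lt_div_iff_of_pos_right h5] at this
  have : l i = l' i := by
    have h1' : l i < l' i + 1 := by exact_mod_cast (by linarith : (l i : ℝ) < l' i + 1)
    have h2' : l' i < l i + 1 := by exact_mod_cast (by linarith : (l' i : ℝ) < l i + 1)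
    omega
  exact this ▸ hl' i

lemma mem_G1_one {y : Pt 1} (hy : y ∈ G1 1) : y 0 ∈ Icc (0 : ℝ) (1 / 5) ∪ Icc (4 / 5) 1 := by
  simp only [G1, mem_iUnion, exists_prop] at hy
  obtain ⟨Q, ⟨⟨⟨l, hl, rfl⟩, -⟩, w, hwQ, hw⟩, hyQ⟩ := hy
  have hw_out : w 0 ≤ 0 ∨ 1 ≤ w 0 := by
    by_contra! h
    refine hw.2 ?_
    rw [interior_F0]
    intro i
    rw [Subsingleton.elim i 0]
    exact h
  obtain ⟨hl1, hl5⟩ := hl 0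
  have hl1' : (1 : ℝ) ≤ l 0 := by exact_mod_cast hl1
  have hl5' : (l 0 : ℝ) ≤ 5 := by exact_mod_cast hl5
  obtain ⟨hy1, hy2⟩ := hyQ 0
  obtain ⟨hw1, hw2⟩ := hwQ 0
  rcases hw_out with h | h
  · left; constructor <;> linarith
  · right; constructor <;> linarith

def pair (a : ℝ) (y : Pt 1) : Pt 2 := WithLp.toLp 2 ![a, y 0]

@[simp] lemma pair_apply_zero (a : ℝ) (y : Pt 1) : pair a y 0 = a := rfl

@[simp] lemma pair_apply_one (a : ℝ) (y : Pt 1) : pair a y 1 = y 0 := rfl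

lemma pair_mem_F1 {a : ℝ} {y : Pt 1} (ha : a ∈ Icc (0 : ℝ) 1)
    (hy : y 0 ∈ Icc (0 : ℝ) (1 / 5) ∪ Icc (4 / 5) 1) : pair a y ∈ F1 2 := by
  have hy1 : y 0 ∈ Icc (0 : ℝ) 1 := by
    rcases hy with h | h <;> exact ⟨by linarith [h.1], by linarith [h.2]⟩
  have hy_band : ¬ (1 / 5 < pair a y 1 ∧ pair a y 1 < 4 / 5) := by
    rw [pair_apply_one]; rintro ⟨h1, h2⟩; rcases hy with h | h <;> linarith [h.1, h.2]
  refine ⟨Fin.forall_fin_two.2 ⟨ha, hy1⟩, ?_⟩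
  simp only [mem_iUnion, Fin.exists_fin_two]
  rintro (⟨-, -, h⟩ | ⟨-, h, -⟩)
  · obtain ⟨h1, h2⟩ := h 1 Fin.zero_lt_one
    exact hy_band ⟨by linarith, by linarith⟩
  · rcases h with ⟨h1, h2⟩ | ⟨h1, h2⟩ <;> exact hy_band ⟨by linarith, by linarith⟩

lemma exists_index_mem_Icc {N : ℕ} (hN : 0 < N) {t : ℝ} (ht : t ∈ Icc (0 : ℝ) 1) :
    ∃ k : ℕ, (1 ≤ k ∧ k ≤ N) ∧ t ∈ Icc (((k : ℝ) - 1) / N) ((k : ℝ) / N) := by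
  have hN' : (0 : ℝ) < N := by exact_mod_cast hN
  have hNt : 0 ≤ N * t := mul_nonneg hN'.le ht.1
  refine ⟨max 1 ⌈N * t⌉₊, ⟨le_max_left _ _, max_le hN (Nat.ceil_le.2 ?_)⟩, ?_, ?_⟩
  · simpa using mul_le_of_le_one_right hN'.le ht.2
  · rw [div_le_iff₀ hN']
    rcases le_total ⌈N * t⌉₊ 1 with h | h
    · rw [max_eq_left h]; push_cast; linarith
    · rw [max_eq_right h]; linarith [Nat.ceil_lt_add_one hNt]
  · rw [le_div_iff₀ hN']
    calc t * N = N * t := mul_comm _ _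
      _ ≤ ⌈N * t⌉₊ := Nat.le_ceil _
      _ ≤ (max 1 ⌈N * t⌉₊ : ℕ) := by exact_mod_cast le_max_right _ _

lemma cube_pair_mem_QcolOf {n k : ℕ} {l : Fin 1 → ℕ} {A : Set (Pt 2)} {B : Set (Pt 1)}
    (hAB : ∀ a ∈ Icc (0 : ℝ) 1, ∀ y ∈ B, pair a y ∈ A) (hk : 1 ≤ k ∧ k ≤ 5 ^ n)
    (hl : cube 1 n l ∈ QcolOf 1 n B) : cube 2 n ![k, l 0] ∈ QcolOf 2 n A := by
  obtain ⟨y, hy, hyB⟩ := hl.2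
  have h5 : (0 : ℝ) < 5 ^ n := by positivity
  have hk1 : (1 : ℝ) ≤ k := by exact_mod_cast hk.1
  have hk5 : (k : ℝ) ≤ 5 ^ n := by exact_mod_cast hk.2
  refine ⟨⟨_, Fin.forall_fin_two.2 ⟨hk, index_mem_of_cube_mem_QcolOf hl 0⟩, rfl⟩,
    pair (((k : ℝ) - 1 / 2) / 5 ^ n) y, ?_, hAB _ ⟨div_nonneg (by linarith) h5.le, ?_⟩ _ hyB⟩
  · rw [mem_interior_cube, Fin.forall_fin_two]
    refine ⟨⟨?_, ?_⟩, mem_interior_cube.1 hy 0⟩ <;>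
      simp only [pair_apply_zero, Matrix.cons_val_zero] <;> gcongr <;> linarith
  · rw [div_le_one h5]; linarith

lemma pair_mem_Fn : ∀ (n : ℕ) {a : ℝ} {y : Pt 1}, a ∈ Icc (0 : ℝ) 1 → y ∈ Gn 1 n →
    pair a y ∈ Fn 2 n
  | 0, _, _, ha, hy => Fin.forall_fin_two.2 ⟨ha, hy 0⟩
  | 1, _, _, ha, hy => pair_mem_F1 ha (mem_G1_one hy)
  | n + 2, a, _, ha, hy => by
    simp only [Gn, mem_iUnion, mem_image, exists_prop] at hy
    obtain ⟨l, hl, y, hy, rfl⟩ := hy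
    obtain ⟨k, hk, hak⟩ := exists_index_mem_Icc (N := 5) (by norm_num) ha
    have hcube : cube 2 1 ![k, l 0] ∈ QcolOf 2 1 (F1 2) :=
      cube_pair_mem_QcolOf (fun a ha y hy => pair_mem_F1 ha (mem_G1_one hy)) hk hl
    have hpsi : pair a (psi 1 1 l y) = psi 2 1 ![k, l 0] (pair (5 * a - (k - 1)) y) := by
      ext i; fin_cases i
      · simp [pair, psi]; ring
      · simp [pair, psi]
    have ha' : 5 * a - (k - 1) ∈ Icc (0 : ℝ) 1 := by
      obtain ⟨h1, h2⟩ := hak; push_cast at h1 h2; constructor <;> linarith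
    rw [hpsi, Fn]
    exact mem_biUnion hcube (mem_image_of_mem _ (pair_mem_Fn (n + 1) ha' hy))

lemma pair_mem_Fset {a : ℝ} {y : Pt 1} (ha : a ∈ Icc (0 : ℝ) 1) (hy : y ∈ Gset 1) :
    pair a y ∈ Fset 2 := by
  refine mem_iInter.2 fun n => ?_
  cases n with
  | zero => exact pair_mem_Fn 0 ha hy.1
  | succ n => exact pair_mem_Fn (n + 1) ha (mem_iInter₂.1 hy.2 (n + 1) (by omega))

lemma rect2_cube (m i : ℕ) (l : Fin 1 → ℕ) :
    rect2 m i (cube 1 (m + 1) l) = cube 2 (m + 1) ![5 ^ m + i, l 0] := by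
  ext x
  simp only [rect2, cube, Fin.forall_fin_two, Fin.forall_fin_one, mem_Icc, mem_ofPred_eq,
    Matrix.cons_val_zero, Matrix.cons_val_one]
  push_cast
  ring_nf

lemma index_le_of_interior_cube_inter_Qone {d m : ℕ} {l : Fin d → ℕ}
    (h : (interior (cube d (m + 1) l) ∩ Qone d).Nonempty) (i : Fin d) : l i ≤ 5 ^ m := by
  obtain ⟨x, hx, hxQ⟩ := h
  have hlt : ((l i : ℝ) - 1) / 5 ^ (m + 1) < 1 / 5 :=
    (mem_interior_cube.1 hx i).1.trans_le (hxQ i).2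
  rw [pow_succ, div_lt_iff₀ (by positivity)] at hlt
  have : (l i : ℝ) < 5 ^ m + 1 := by linarith
  exact Nat.lt_succ_iff.1 (by exact_mod_cast this)

theorem statement16_general (m : ℕ) (Qt : Set (Pt 1))
    (hQt : Qt ∈ QcolOf 1 (m + 1) (Gset 1 ∩ Qone 1)) :
    (∀ i ≤ 5 ^ m + 1, rect2 m i Qt ∈ QcolOf 2 (m + 1) (Fset 2)) ∧
    rect2 m 0 Qt ∈ Sm 2 1 m {Qone 2} ∧
    rect2 m (5 ^ m + 1) Qt ∈ Sm 2 1 m (GamC 2 1 (Qone 2)) := by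
  obtain ⟨⟨l, hl, rfl⟩, y, hy, hyG, hyQ⟩ := hQt
  have hl0 : 1 ≤ l 0 ∧ l 0 ≤ 5 ^ m :=
    ⟨(hl 0).1, index_le_of_interior_cube_inter_Qone ⟨y, hy, hyQ⟩ 0⟩
  have h5m : (1 : ℝ) ≤ 5 ^ m := one_le_pow₀ (by norm_num)
  have hl0' : (1 : ℝ) ≤ l 0 ∧ (l 0 : ℝ) ≤ 5 ^ m := by exact_mod_cast hl0
  have hcol (i : ℕ) (hi : i ≤ 5 ^ m + 1) :
      rect2 m i (cube 1 (m + 1) l) ∈ QcolOf 2 (m + 1) (Fset 2) := by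
    rw [rect2_cube]
    exact cube_pair_mem_QcolOf (B := Gset 1 ∩ Qone 1) (fun a ha y hy => pair_mem_Fset ha hy.1)
      ⟨by omega, by rw [pow_succ]; omega⟩ ⟨⟨l, hl, rfl⟩, y, hy, hyG, hyQ⟩
  have hQt : cube 1 (m + 1) l ⊆ cube 1 1 1 :=
    cube_subset_cube fun i => by rw [Subsingleton.elim i 0]; simpa using hl0'
  refine ⟨hcol, ⟨add_comm m 1 ▸ hcol 0 (by omega), Qone 2, rfl, ?_⟩,
    ⟨add_comm m 1 ▸ hcol _ le_rfl, cube 2 1 ![3, 1], ⟨?_, ?_⟩, ?_⟩⟩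
  · rw [rect2_cube, Qone_eq_cube]
    exact cube_subset_cube (Fin.forall_fin_two.2 ⟨by simpa using h5m, by simpa using hl0'⟩)
  · exact cube_pair_mem_QcolOf (l := 1) (fun a ha y hy => pair_mem_Fset ha hy) (by norm_num)
      ⟨⟨1, fun _ => by simp, rfl⟩, y, interior_mono hQt hy, hyG⟩
  · rintro ⟨-, x, hx, hxQ⟩
    have h1 := (hx 0).1
    have h2 := (hxQ 0).2
    norm_num at h1 h2
    linarith
  · rw [rect2_cube]
    refine cube_subset_cube (Fin.forall_fin_two.2 ⟨?_, by simpa using hl0'⟩)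
    push_cast
    constructor <;> linarith

/-- The chain of rectangles `Q_{Q̃,i}`, `0 ≤ i ≤ 5^m + 1`, over an interval
`Q̃ ∈ 𝒬_{m+1}⁽¹⁾(G⁽¹⁾ ∩ [0,1/5])` consists of level-`(m+1)` cells of `F⁽²⁾`, starting in
`Sᵐ({Q₁})` and ending in `Sᵐ(Γ(Q₁)ᶜ)`, where `Q₁ = [0,1/5]²`. -/
theorem statement16 (m : ℕ) (hm : 1 ≤ m) (Qt : Set (Pt 1))
    (hQt : Qt ∈ QcolOf 1 (m + 1) (Gset 1 ∩ Qone 1)) :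
    (∀ i ≤ 5 ^ m + 1, rect2 m i Qt ∈ QcolOf 2 (m + 1) (Fset 2)) ∧
    rect2 m 0 Qt ∈ Sm 2 1 m {Qone 2} ∧
    rect2 m (5 ^ m + 1) Qt ∈ Sm 2 1 m (GamC 2 1 (Qone 2)) :=
  statement16_general m Qt hQt
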